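/- arXiv:1703.01168 — 3 statements merged into one kernel-verified Lean document; each statement's English description precedes it below -/
import Mathlib

section
/- Let X₁, …, X_m be random variables with finite ranges on a common probability space, and let 1 ≤ n ≤ m. With indices taken cyclically modulo m (so X_{k+m} = X_k), n·H(X₁, …, X_m) ≤ ∑_{i=1}^{m} H(X_i, X_{i+1}, …, X_{i+n−1}); that is, n times the joint entropy of all m variables is at most the sum over all m cyclic windows of n consecutive variables of the joint entropy of the window. In particular, for m = 3, n = 2: 2·H(X₁, X₂, X₃) ≤ H(X₁, X₂) + H(X₂, X₃) + H(X₃, X₁). -/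
open MeasureTheory ProbabilityTheory

noncomputable section

/-- Truncation of a real number toward zero. -/
def truncZ (x : ℝ) : ℤ := if 0 ≤ x then ⌊x⌋ else ⌈x⌉

/-- `pbar P lam = ⌊P ^ (lam / 2)⌋`, i.e. `P̄^lam`. -/
def pbar (P lam : ℝ) : ℤ := ⌊P ^ (lam / 2)⌋

/-- The alphabet `𝒳_lam = {0, 1, …, P̄^lam − 1}`. -/
def Xalph (P lam : ℝ) : Set ℤ := {x : ℤ | 0 ≤ x ∧ x < pbar P lam}

/-- `(X)_lam = X − P̄^lam ⌊X / P̄^lam⌋` (division truncated toward zero). -/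
def lowPart (P lam : ℝ) (X : ℤ) : ℤ := X - pbar P lam * (X.tdiv (pbar P lam))

/-- `(X)^hi_lo = ⌊(X − P̄^hi ⌊X / P̄^hi⌋) / P̄^lo⌋` (divisions truncated toward zero). -/
def midPart (P lo hi : ℝ) (X : ℤ) : ℤ := (lowPart P hi X).tdiv (pbar P lo)

/-- Shannon entropy (natural log) of a random variable with (essentially) finite range. -/
def shEntropy {Ω : Type*} [MeasurableSpace Ω] (μ : Measure Ω) {α : Type*} (X : Ω → α) : ℝ :=
  ∑' a : α, Real.negMulLog (μ (X ⁻¹' {a})).toReal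

/-- Conditional Shannon entropy `H(X | Y)`, defined through conditional expectations of
indicators with respect to the σ-algebra generated by `Y`. -/
def shCondEntropy {Ω : Type*} [MeasurableSpace Ω] (μ : Measure Ω) {α β : Type*}
    [MeasurableSpace β] (X : Ω → α) (Y : Ω → β) : ℝ :=
  ∫ ω, ∑' a : α,
    Real.negMulLog
      ((μ[Set.indicator (X ⁻¹' {a}) (fun _ => (1 : ℝ)) | MeasurableSpace.comap Y inferInstance]) ω)
    ∂μ

/-- `X` and `Y` are conditionally independent given `W`. -/
def CondIndepGiven {Ω α β γ : Type*} [MeasurableSpace Ω] [MeasurableSpace α] [MeasurableSpace β]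
    [MeasurableSpace γ] (μ : Measure Ω) (W : Ω → γ) (X : Ω → α) (Y : Ω → β) : Prop :=
  ∀ (A : Set α) (B : Set β), MeasurableSet A → MeasurableSet B →
    (μ[Set.indicator (X ⁻¹' A ∩ Y ⁻¹' B) (fun _ => (1 : ℝ)) |
        MeasurableSpace.comap W inferInstance])
      =ᵐ[μ]
      fun ω =>
        (μ[Set.indicator (X ⁻¹' A) (fun _ => (1 : ℝ)) | MeasurableSpace.comap W inferInstance]) ω *
        (μ[Set.indicator (Y ⁻¹' B) (fun _ => (1 : ℝ)) | MeasurableSpace.comap W inferInstance]) ω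

/-- The conditional distribution of `g` given `V` is a.s. absolutely continuous with
density bounded above by `fmax`: equivalently, the conditional probability of any
measurable set `S` is a.s. at most `fmax · volume S`. -/
def CondDensityBounded {Ω β : Type*} [MeasurableSpace Ω] [MeasurableSpace β]
    (μ : Measure Ω) (g : Ω → ℝ) (V : Ω → β) (fmax : ℝ) : Prop :=
  ∀ S : Set ℝ, MeasurableSet S →
    ∀ᵐ ω ∂μ,
      ENNReal.ofReal
          ((μ[Set.indicator (g ⁻¹' S) (fun _ => (1 : ℝ)) |
              MeasurableSpace.comap V inferInstance]) ω)
        ≤ ENNReal.ofReal fmax * volume S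

/-- Density part of the bounded-density assumption for a family `g`, conditioned on a
random variable `W`: for disjoint subfamilies `s, t`, the conditional joint distribution of
`(g i)_{i ∈ s}` given `(W, (g j)_{j ∈ t})` is a.s. absolutely continuous with joint density
bounded above by `fmax ^ |s|`. -/
def CondBoundedDensityFamily {Ω ι γ : Type*} [MeasurableSpace Ω] [MeasurableSpace γ]
    [DecidableEq ι] (μ : Measure Ω) (W : Ω → γ) (g : ι → Ω → ℝ) (fmax : ℝ) : Prop :=
  ∀ (s t : Finset ι), s.Nonempty → Disjoint s t →
    ∀ S : Set (s → ℝ), MeasurableSet S →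
      ∀ᵐ ω ∂μ,
        ENNReal.ofReal
            ((μ[Set.indicator ((fun ω (i : s) => g i ω) ⁻¹' S) (fun _ => (1 : ℝ)) |
                MeasurableSpace.comap (fun ω => (W ω, fun j : t => g j ω)) inferInstance]) ω)
          ≤ ENNReal.ofReal (fmax ^ s.card) * volume S

/-- The `(Δ₁, Δ₂, fmax)`-bounded-density assumption for a family `g` of real random
variables (Definition 4 of the paper). -/
def BoundedDensityFamily {Ω ι : Type*} [MeasurableSpace Ω] [DecidableEq ι]
    (μ : Measure Ω) (g : ι → Ω → ℝ) (Δ₁ Δ₂ fmax : ℝ) : Prop :=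
  (∀ i, ∀ᵐ ω ∂μ, Δ₁ ≤ |g i ω| ∧ |g i ω| ≤ Δ₂) ∧
  ∀ (s t : Finset ι), s.Nonempty → Disjoint s t →
    ∀ S : Set (s → ℝ), MeasurableSet S →
      ∀ᵐ ω ∂μ,
        ENNReal.ofReal
            ((μ[Set.indicator ((fun ω (i : s) => g i ω) ⁻¹' S) (fun _ => (1 : ℝ)) |
                MeasurableSpace.comap (fun ω (j : t) => g j ω) inferInstance]) ω)
          ≤ ENNReal.ofReal (fmax ^ s.card) * volume S

/-- Partial sums `Λ_i = λ₁ + ⋯ + λ_i` of the power levels (0-based: `cumSum lam i`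
sums the first `i` entries). -/
def cumSum {M : ℕ} (lam : Fin M → ℝ) (i : ℕ) : ℝ :=
  ∑ r ∈ Finset.univ.filter (fun r : Fin M => (r : ℕ) < i), lam r

end

/-!
Let `h S` be the joint entropy of the variables indexed by `S ⊆ Fin m`. Conditioning on more
variables reduces entropy, i.e. `h` is submodular, so the increments
`Δ j = h({i ≤ j}) - h({i < j})` satisfy `∑ j ∈ S, Δ j ≤ h S` for every `S`, while they sum to
`h univ`. Every index lies in exactly `n` of the `m` cyclic windows, hence summing over the
windows gives `n · h univ = ∑ windows ∑ j ∈ W, Δ j ≤ ∑ windows h W`.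
-/

open Finset

namespace Real

theorem negMulLog_sum_le {ι : Type*} (s : Finset ι) {w : ι → ℝ} (hw : ∀ i ∈ s, 0 ≤ w i) :
    negMulLog (∑ i ∈ s, w i) ≤ ∑ i ∈ s, negMulLog (w i) := by
  simp only [negMulLog_eq_neg, sum_mul, ← sum_neg_distrib]
  refine sum_le_sum fun i hi => neg_le_neg ?_
  rcases (hw i hi).eq_or_lt with h | h
  · simp [← h]
  · exact mul_le_mul_of_nonneg_left (log_le_log h (single_le_sum hw hi)) h.le

/-- The pointwise form of Gibbs' inequality `q log (t / q) ≤ t - q`, with `t = x y / z`. -/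
theorem mul_log_add_log_sub_log_le {q x y z : ℝ} (hq : 0 ≤ q) (hx : 0 ≤ x) (hy : 0 ≤ y)
    (hz : 0 ≤ z) (hqx : q ≤ x) (hqy : q ≤ y) (hqz : q ≤ z) :
    q * (log x + log y - log z) ≤ q * log q + (x * y / z - q) := by
  rcases hq.eq_or_lt with rfl | hq
  · simp only [zero_mul, zero_add, sub_zero]
    positivity
  have hx' := hq.trans_le hqx
  have hy' := hq.trans_le hqy
  have hz' := hq.trans_le hqz
  calc q * (log x + log y - log z) = q * log q + q * log (x * y / (z * q)) := by
        rw [log_div (by positivity) (by positivity), log_mul hx'.ne' hy'.ne',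
          log_mul hz'.ne' hq.ne']
        ring
    _ ≤ q * log q + q * (x * y / (z * q) - 1) := by
        gcongr
        exact log_le_sub_one_of_pos (by positivity)
    _ = q * log q + (x * y / z - q) := by field_simp

/-- Subadditivity of entropy, for an unnormalised joint distribution `Q`. -/
theorem sum_negMulLog_add_negMulLog_sum_le {A B : Type*} [Fintype A] [Fintype B]
    {Q : A → B → ℝ} (hQ : ∀ a b, 0 ≤ Q a b) :
    ∑ a, ∑ b, negMulLog (Q a b) + negMulLog (∑ a, ∑ b, Q a b)
      ≤ ∑ a, negMulLog (∑ b, Q a b) + ∑ b, negMulLog (∑ a, Q a b) := by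
  set r := fun a => ∑ b, Q a b
  set c := fun b => ∑ a, Q a b
  set s := ∑ a, ∑ b, Q a b with hs
  have hr0 a : 0 ≤ r a := sum_nonneg fun b _ => hQ a b
  have hc0 b : 0 ≤ c b := sum_nonneg fun a _ => hQ a b
  have hsr : s = ∑ a, r a := rfl
  have hsc : s = ∑ b, c b := sum_comm
  -- Gibbs' inequality against the product `r a * c b / s` of the marginals
  have hpoint a b : Q a b * (log (r a) + log (c b) - log s)
      ≤ Q a b * log (Q a b) + (r a * c b / s - Q a b) :=
    mul_log_add_log_sub_log_le (hQ a b) (hr0 a) (hc0 b) (sum_nonneg fun a _ => hr0 a)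
      (single_le_sum (fun b _ => hQ a b) (mem_univ b))
      (single_le_sum (f := fun a => Q a b) (fun a _ => hQ a b) (mem_univ a))
      ((single_le_sum (fun b _ => hQ a b) (mem_univ b)).trans
        (single_le_sum (fun a _ => hr0 a) (mem_univ a)))
  have hlhs : ∑ a, ∑ b, Q a b * (log (r a) + log (c b) - log s)
      = ∑ a, r a * log (r a) + ∑ b, c b * log (c b) - s * log s := by
    simp only [mul_sub, mul_add, sum_sub_distrib, sum_add_distrib, ← sum_mul]
    rw [sum_comm (f := fun a b => Q a b * log (c b))]
    simp only [← sum_mul]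
    rfl
  have hrhs : ∑ a, ∑ b, (Q a b * log (Q a b) + (r a * c b / s - Q a b))
      = ∑ a, ∑ b, Q a b * log (Q a b) := by
    simp only [sum_add_distrib, sum_sub_distrib, ← sum_div, ← mul_sum, ← sum_mul, ← hsr, ← hsc]
    rw [mul_self_div_self, ← hs, sub_self, add_zero]
  have hsum := sum_le_sum fun a (_ : a ∈ univ) => sum_le_sum fun b (_ : b ∈ univ) => hpoint a b
  rw [hlhs, hrhs] at hsum
  simp only [negMulLog_eq_neg, sum_neg_distrib]
  linarith

end Real

def Submodular {ι : Type*} [DecidableEq ι] (h : Finset ι → ℝ) : Prop :=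
  ∀ ⦃S T : Finset ι⦄ (j : ι), S ⊆ T → h (insert j T) - h T ≤ h (insert j S) - h S

namespace Fin

variable {m : ℕ}

def prefixGain (h : Finset (Fin m) → ℝ) (j : Fin m) : ℝ :=
  h (insert j (Iio j)) - h (Iio j)

theorem sum_prefixGain (h : Finset (Fin m) → ℝ) : ∑ j, prefixGain h j = h univ - h ∅ := by
  set g : ℕ → ℝ := fun k => h {i | (i : ℕ) < k}
  have hg (j : Fin m) : prefixGain h j = g (j + 1) - g j := by
    simp only [prefixGain, g]
    congr 2 <;> ext i <;> simp
  rw [Fintype.sum_congr _ _ hg, Fin.sum_univ_eq_sum_range (fun k => g (k + 1) - g k),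
    sum_range_sub]
  simp only [g]
  congr 2 <;> ext i <;> simp

theorem sum_sum_add_castLE {n : ℕ} (hnm : n ≤ m) (f : Fin m → ℝ) :
    ∑ i, ∑ k : Fin n, f (i + castLE hnm k) = n * ∑ j, f j := by
  have hshift (a : Fin m) : ∑ i, f (i + a) = ∑ j, f j := by
    have := NeZero.of_pos a.pos
    exact Fintype.sum_equiv (Equiv.addRight a) _ _ fun _ => rfl
  rw [sum_comm]
  simp only [hshift, sum_const, nsmul_eq_mul]

end Fin

namespace Submodular

variable {m : ℕ} {h : Finset (Fin m) → ℝ}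

theorem sum_prefixGain_le (hh : Submodular h) (h0 : h ∅ = 0) (S : Finset (Fin m)) :
    ∑ j ∈ S, Fin.prefixGain h j ≤ h S := by
  induction S using Finset.induction_on_max with
  | empty => simp [h0]
  | insert a s hlt ih =>
    have has : a ∉ s := fun ha => lt_irrefl a (hlt a ha)
    have hgain := hh a fun x hx => mem_Iio.2 (hlt x hx)
    rw [sum_insert has, Fin.prefixGain]
    linarith

theorem mul_le_sum_window (hh : Submodular h) (h0 : h ∅ = 0) {n : ℕ} (hnm : n ≤ m) :
    n * h univ ≤ ∑ i, h (univ.image fun k : Fin n => i + Fin.castLE hnm k) := by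
  have hwindow (i : Fin m) :
      ∑ j ∈ univ.image (fun k : Fin n => i + Fin.castLE hnm k), Fin.prefixGain h j
        = ∑ k : Fin n, Fin.prefixGain h (i + Fin.castLE hnm k) :=
    sum_image fun k _ l _ hkl => Fin.castLE_injective hnm (add_left_cancel hkl)
  calc (n : ℝ) * h univ = ∑ i, ∑ k : Fin n, Fin.prefixGain h (i + Fin.castLE hnm k) := by
        rw [Fin.sum_sum_add_castLE, Fin.sum_prefixGain, h0, sub_zero]
    _ = ∑ i, ∑ j ∈ univ.image (fun k : Fin n => i + Fin.castLE hnm k), Fin.prefixGain h j := by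
        simp only [hwindow]
    _ ≤ _ := sum_le_sum fun i _ => hh.sum_prefixGain_le h0 _

end Submodular

open Real

section Entropy

variable {Ω : Type*} [MeasurableSpace Ω] {μ : Measure Ω}

theorem shEntropy_eq_sum {κ : Type*} [Fintype κ] (μ : Measure Ω) (f : Ω → κ) :
    shEntropy μ f = ∑ k, negMulLog (μ.real (f ⁻¹' {k})) :=
  tsum_fintype _

theorem sum_measureReal_inter_preimage_singleton [IsFiniteMeasure μ] {β : Type*} [Fintype β]
    [MeasurableSpace β] [MeasurableSingletonClass β] (S : Set Ω) {g : Ω → β}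
    (hg : Measurable g) :
    ∑ b, μ.real (S ∩ g ⁻¹' {b}) = μ.real S := by
  have := sum_measureReal_preimage_singleton (μ := μ.restrict S) univ
    fun b _ => hg (measurableSet_singleton b)
  simpa [measureReal_restrict_apply (hg (measurableSet_singleton _)), Set.inter_comm] using this

theorem shEntropy_comp_le [IsFiniteMeasure μ] {κ β : Type*} [Fintype κ] [MeasurableSpace κ]
    [MeasurableSingletonClass κ] [Fintype β] {f : Ω → κ} (hf : Measurable f) (u : κ → β) :
    shEntropy μ (u ∘ f) ≤ shEntropy μ f := by
  classical
  rw [shEntropy_eq_sum, shEntropy_eq_sum, ← sum_fiberwise univ u]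
  refine sum_le_sum fun b _ => ?_
  rw [show (u ∘ f) ⁻¹' {b} = f ⁻¹' ↑(univ.filter fun k => u k = b) by ext; simp,
    ← sum_measureReal_preimage_singleton _ fun k _ => hf (measurableSet_singleton k)]
  exact negMulLog_sum_le _ fun k _ => measureReal_nonneg

theorem shEntropy_le_of_factorsThrough [IsFiniteMeasure μ] {κ β : Type*} [Fintype κ]
    [MeasurableSpace κ] [MeasurableSingletonClass κ] [Fintype β] {f : Ω → κ} (hf : Measurable f)
    {g : Ω → β} (hgf : Function.FactorsThrough g f) :
    shEntropy μ g ≤ shEntropy μ f := by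
  rcases isEmpty_or_nonempty Ω with hΩ | ⟨⟨ω⟩⟩
  · simp [shEntropy, Set.eq_empty_of_isEmpty]
  · rw [← hgf.extend_comp fun _ => g ω]
    exact shEntropy_comp_le hf _

theorem shEntropy_eq_of_factorsThrough [IsFiniteMeasure μ] {κ β : Type*} [Fintype κ]
    [MeasurableSpace κ] [MeasurableSingletonClass κ] [Fintype β] [MeasurableSpace β]
    [MeasurableSingletonClass β] {f : Ω → κ} {g : Ω → β} (hf : Measurable f) (hg : Measurable g)
    (hgf : Function.FactorsThrough g f) (hfg : Function.FactorsThrough f g) :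
    shEntropy μ g = shEntropy μ f :=
  (shEntropy_le_of_factorsThrough hf hgf).antisymm (shEntropy_le_of_factorsThrough hg hfg)

theorem shEntropy_of_unique [IsProbabilityMeasure μ] {κ : Type*} [Unique κ] (f : Ω → κ) :
    shEntropy μ f = 0 := by
  have hfiber : f ⁻¹' {default} = Set.univ :=
    Set.eq_univ_of_forall fun ω => Unique.eq_default (f ω)
  simp [shEntropy_eq_sum, hfiber]

theorem shEntropy_prod_prod_add_le [IsFiniteMeasure μ] {A B C : Type*} [Fintype A] [Fintype B]
    [Fintype C] [MeasurableSpace A] [MeasurableSpace B] [MeasurableSingletonClass A]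
    [MeasurableSingletonClass B] {X : Ω → A} {Y : Ω → B} (hX : Measurable X)
    (hY : Measurable Y) (Z : Ω → C) :
    shEntropy μ (fun ω => (X ω, Y ω, Z ω)) + shEntropy μ Z
      ≤ shEntropy μ (fun ω => (X ω, Z ω)) + shEntropy μ (fun ω => (Y ω, Z ω)) := by
  set P : C → A → B → ℝ := fun z x y => μ.real (X ⁻¹' {x} ∩ (Y ⁻¹' {y} ∩ Z ⁻¹' {z}))
  have hXZ x z : μ.real (X ⁻¹' {x} ∩ Z ⁻¹' {z}) = ∑ y, P z x y := by
    rw [← sum_measureReal_inter_preimage_singleton _ hY]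
    simp only [P, Set.inter_assoc, Set.inter_comm (Z ⁻¹' _)]
  have hYZ y z : μ.real (Y ⁻¹' {y} ∩ Z ⁻¹' {z}) = ∑ x, P z x y := by
    rw [← sum_measureReal_inter_preimage_singleton _ hX]
    simp only [P, Set.inter_comm _ (X ⁻¹' _)]
  have hZ z : μ.real (Z ⁻¹' {z}) = ∑ x, ∑ y, P z x y := by
    rw [← sum_measureReal_inter_preimage_singleton _ hX]
    simp only [Set.inter_comm (Z ⁻¹' _), hXZ]
  simp only [shEntropy_eq_sum, Fintype.sum_prod_type, ← Set.singleton_prod_singleton,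
    Set.mk_preimage_prod, hXZ, hYZ, hZ]
  calc ∑ x, ∑ y, ∑ z, negMulLog (P z x y) + ∑ z, negMulLog (∑ x, ∑ y, P z x y)
      = ∑ z, (∑ x, ∑ y, negMulLog (P z x y) + negMulLog (∑ x, ∑ y, P z x y)) := by
        rw [sum_add_distrib]
        congr 1
        exact (sum_comm.trans (sum_congr rfl fun _ _ => sum_comm)).symm
    _ ≤ ∑ z, (∑ x, negMulLog (∑ y, P z x y) + ∑ y, negMulLog (∑ x, P z x y)) :=
        sum_le_sum fun z _ => sum_negMulLog_add_negMulLog_sum_le fun _ _ => measureReal_nonneg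
    _ = ∑ x, ∑ z, negMulLog (∑ y, P z x y) + ∑ y, ∑ z, negMulLog (∑ x, P z x y) := by
        rw [sum_add_distrib, sum_comm,
          sum_comm (s := univ) (t := univ) (f := fun z y => negMulLog (∑ x, P z x y))]

/-- Conditioning reduces entropy: `H(X | Y) ≤ H(X | Z)` when `Z` is a function of `Y`. -/
theorem shEntropy_prod_add_le_of_factorsThrough [IsFiniteMeasure μ] {A B C : Type*} [Fintype A]
    [Fintype B] [Fintype C] [MeasurableSpace A] [MeasurableSpace B] [MeasurableSpace C]
    [MeasurableSingletonClass A] [MeasurableSingletonClass B] [MeasurableSingletonClass C]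
    {X : Ω → A} {Y : Ω → B} {Z : Ω → C} (hX : Measurable X) (hY : Measurable Y)
    (hZ : Measurable Z) (hZY : Function.FactorsThrough Z Y) :
    shEntropy μ (fun ω => (X ω, Y ω)) + shEntropy μ Z
      ≤ shEntropy μ (fun ω => (X ω, Z ω)) + shEntropy μ Y := by
  have hXYZ : shEntropy μ (fun ω => (X ω, Y ω, Z ω)) = shEntropy μ (fun ω => (X ω, Y ω)) := by
    refine shEntropy_eq_of_factorsThrough (hX.prodMk hY) (hX.prodMk (hY.prodMk hZ)) ?_ ?_
    · intro ω ω' h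
      simp only [Prod.mk.injEq] at h ⊢
      exact ⟨h.1, h.2, hZY h.2⟩
    · intro ω ω' h
      simp only [Prod.mk.injEq] at h ⊢
      exact ⟨h.1, h.2.1⟩
  have hYZ : shEntropy μ (fun ω => (Y ω, Z ω)) = shEntropy μ Y := by
    refine shEntropy_eq_of_factorsThrough hY (hY.prodMk hZ) ?_ ?_
    · intro ω ω' h
      simp only [Prod.mk.injEq]
      exact ⟨h, hZY h⟩
    · intro ω ω' h
      exact (Prod.mk.inj h).1
  linarith [shEntropy_prod_prod_add_le (μ := μ) hX hY Z]

end Entropy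

section Restrict

variable {Ω : Type*} [MeasurableSpace Ω] {μ : Measure Ω} [IsFiniteMeasure μ] {ι : Type*}
  [DecidableEq ι] {α : ι → Type*} [∀ i, Fintype (α i)] [∀ i, MeasurableSpace (α i)]
  [∀ i, MeasurableSingletonClass (α i)] {X : ∀ i, Ω → α i}

theorem shEntropy_comp_eq_restrict_image (hX : ∀ i, Measurable (X i)) {κ : Type*} [Fintype κ]
    (e : κ → ι) :
    shEntropy μ (fun ω k => X (e k) ω) = shEntropy μ (fun ω (i : univ.image e) => X i ω) := by
  classical
  refine shEntropy_eq_of_factorsThrough (measurable_pi_lambda _ fun i => hX i)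
    (measurable_pi_lambda _ fun k => hX (e k)) ?_ ?_
  · intro ω ω' h
    funext k
    exact congrFun h ⟨e k, mem_image_of_mem e (mem_univ k)⟩
  · intro ω ω' h
    funext ⟨i, hi⟩
    obtain ⟨k, -, rfl⟩ := mem_image.1 hi
    exact congrFun h k

theorem shEntropy_prod_eq_restrict_insert (hX : ∀ i, Measurable (X i)) (j : ι) (U : Finset ι) :
    shEntropy μ (fun ω => (X j ω, fun i : U => X i ω))
      = shEntropy μ (fun ω (i : (insert j U : Finset ι)) => X i ω) := by
  refine shEntropy_eq_of_factorsThrough (measurable_pi_lambda _ fun i => hX i)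
    ((hX j).prodMk (measurable_pi_lambda _ fun i => hX i)) ?_ ?_
  · intro ω ω' h
    exact Prod.ext (congrFun h ⟨j, mem_insert_self j U⟩)
      (funext fun i => congrFun h ⟨i, mem_insert_of_mem i.2⟩)
  · intro ω ω' h
    funext ⟨i, hi⟩
    rcases mem_insert.1 hi with rfl | hi
    · exact (Prod.mk.inj h).1
    · exact congrFun (Prod.mk.inj h).2 ⟨i, hi⟩

theorem submodular_shEntropy_restrict (hX : ∀ i, Measurable (X i)) :
    Submodular fun S : Finset ι => shEntropy μ fun ω (i : S) => X i ω := by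
  intro S T j hST
  have hcond := shEntropy_prod_add_le_of_factorsThrough (μ := μ) (hX j)
    (measurable_pi_lambda _ fun i : T => hX i) (measurable_pi_lambda _ fun i : S => hX i)
    (fun ω ω' h => funext fun i => congrFun h ⟨i, hST i.2⟩)
  rw [shEntropy_prod_eq_restrict_insert hX, shEntropy_prod_eq_restrict_insert hX] at hcond
  linarith

end Restrict

open MeasureTheory ProbabilityTheory in
theorem stmt_11_general (m n : ℕ) (hnm : n ≤ m)
    (Ω : Type) [MeasurableSpace Ω] (μ : Measure Ω) [IsProbabilityMeasure μ]
    (α : Fin m → Type) [∀ i, Finite (α i)] [∀ i, MeasurableSpace (α i)]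
    [∀ i, MeasurableSingletonClass (α i)]
    (X : (i : Fin m) → Ω → α i) (hX : ∀ i, Measurable (X i)) :
    (n : ℝ) * shEntropy μ (fun ω (i : Fin m) => X i ω)
      ≤ ∑ i : Fin m,
          shEntropy μ (fun ω (k : Fin n) => X (i + Fin.castLE hnm k) ω) := by
  have (i : Fin m) : Fintype (α i) := Fintype.ofFinite _
  have hfull : shEntropy μ (fun ω (i : Fin m) => X i ω)
      = shEntropy μ (fun ω (i : (univ : Finset (Fin m))) => X i ω) := by
    have := shEntropy_comp_eq_restrict_image (μ := μ) hX id
    rwa [image_id] at this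
  rw [hfull, Fintype.sum_congr _ _ fun i => shEntropy_comp_eq_restrict_image hX _]
  exact (submodular_shEntropy_restrict hX).mul_le_sum_window (shEntropy_of_unique _) hnm

open MeasureTheory ProbabilityTheory in
theorem stmt_11 (m n : ℕ) (hn : 1 ≤ n) (hnm : n ≤ m)
    (Ω : Type) [MeasurableSpace Ω] (μ : Measure Ω) [IsProbabilityMeasure μ]
    (α : Fin m → Type) [∀ i, Finite (α i)] [∀ i, MeasurableSpace (α i)]
    [∀ i, MeasurableSingletonClass (α i)]
    (X : (i : Fin m) → Ω → α i) (hX : ∀ i, Measurable (X i)) :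
    (n : ℝ) * shEntropy μ (fun ω (i : Fin m) => X i ω)
      ≤ ∑ i : Fin m,
          shEntropy μ (fun ω (k : Fin n) => X (i + Fin.castLE hnm k) ω) :=
  stmt_11_general m n hnm Ω μ α X hX
end

section
/- Let Z′ be a random variable with finite range 𝒱, let W be a random variable with finite range, let G be a random variable with values in a standard Borel space such that the pair (Z′, W) is independent of G, and let Z = φ(Z′, W, G) for a measurable function φ with values in a finite set. Then H(Z′ | W) − H(Z | W, G) ≤ E[ log |{ζ ∈ 𝒱 : φ(ζ, W, G) = φ(Z′, W, G)}| ], i.e., the difference of entropies is bounded above by the expected logarithm of the cardinality of the aligned image set containing the realized value of Z′. -/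
open MeasureTheory ProbabilityTheory

/-!
Conditioning on `G` as well as `W` does not change the conditional law of `Z'`, because `G` is
independent of `(Z', W)`; hence `H(Z' | W) = H(Z' | W, G)`. Given `(W, G) = (w, g)`, the
conditional law of `Z` is the image of that of `Z'` under `ζ ↦ φ (ζ, w, g)`, and merging a fibre
of `n` points loses at most its mass times `log n` of entropy (Jensen's inequality for the concave
`x ↦ -x log x`). Summing over fibres and integrating, the loss is `E[log |fibre of Z'|]`.
-/

open Finset

namespace Real

lemma sum_negMulLog_le_negMulLog_sum_add_mul_log_card {ι : Type*} (s : Finset ι) {p : ι → ℝ}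
    (hp : ∀ i ∈ s, 0 ≤ p i) :
    ∑ i ∈ s, negMulLog (p i) ≤ negMulLog (∑ i ∈ s, p i) + (∑ i ∈ s, p i) * log #s := by
  rcases s.eq_empty_or_nonempty with rfl | hs
  · simp
  have hn : (0 : ℝ) < #s := by exact_mod_cast hs.card_pos
  have jensen := concaveOn_negMulLog.le_map_sum (t := s) (w := fun _ => (#s : ℝ)⁻¹) (p := p)
    (fun _ _ => by positivity) (by simp [hn.ne']) hp
  simp only [smul_eq_mul, ← Finset.mul_sum] at jensen
  rw [mul_comm, negMulLog_mul, negMulLog, log_inv] at jensen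
  have := mul_le_mul_of_nonneg_left jensen hn.le
  field_simp at this
  linarith

lemma sum_negMulLog_sub_sum_negMulLog_fiber_le {α δ : Type*} [Fintype α] [Fintype δ]
    [DecidableEq δ] (ψ : α → δ) {p : α → ℝ} (hp : ∀ a, 0 ≤ p a) :
    ∑ a, negMulLog (p a) - ∑ d, negMulLog (∑ a with ψ a = d, p a)
      ≤ ∑ a, log {b | ψ b = ψ a}.ncard * p a := by
  have hcard : ∀ a, ({b | ψ b = ψ a}.ncard : ℝ) = #{b | ψ b = ψ a} := fun a => by
    rw [Set.ncard_eq_toFinset_card', Set.toFinset_ofPred]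
  simp only [hcard]
  rw [← Finset.sum_fiberwise univ ψ (fun a => negMulLog (p a)),
    ← Finset.sum_fiberwise univ ψ (fun a => log #{b | ψ b = ψ a} * p a), ← Finset.sum_sub_distrib]
  refine Finset.sum_le_sum fun d _ => ?_
  calc ∑ a with ψ a = d, negMulLog (p a) - negMulLog (∑ a with ψ a = d, p a)
      ≤ (∑ a with ψ a = d, p a) * log #{b | ψ b = d} := by
        linarith [sum_negMulLog_le_negMulLog_sum_add_mul_log_card {a | ψ a = d} fun a _ => hp a]
    _ = ∑ a with ψ a = d, log #{b | ψ b = ψ a} * p a := by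
        rw [Finset.sum_mul]
        refine Finset.sum_congr rfl fun a ha => ?_
        rw [(Finset.mem_filter.1 ha).2, mul_comm]

end Real

lemma measurable_log_ncard_setOf_eq {α β δ : Type*} [Finite α] [MeasurableSpace α]
    [MeasurableSingletonClass α] [MeasurableSpace β] [Countable δ] [MeasurableSpace δ]
    [MeasurableSingletonClass δ] {ψ : α × β → δ} (hψ : Measurable ψ) :
    Measurable fun x : α × β => Real.log ({ζ | ψ (ζ, x.2) = ψ x}.ncard : ℝ) :=
  (measurable_of_countable fun fa : (α → δ) × α =>
      Real.log ({ζ | fa.1 ζ = fa.1 fa.2}.ncard : ℝ)).comp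
    (f := fun x : α × β => ((fun ζ => ψ (ζ, x.2)), x.1))
    ((measurable_pi_lambda _ fun _ => hψ.comp (measurable_const.prodMk measurable_snd)).prodMk
      measurable_fst)

section IndepSup

variable {Ω : Type*} {mΩ : MeasurableSpace Ω} {μ : Measure Ω}

lemma MeasurableSpace.sup_eq_generateFrom_inter (m₁ m₂ : MeasurableSpace Ω) :
    m₁ ⊔ m₂ = .generateFrom
      (Set.image2 (· ∩ ·) {s | MeasurableSet[m₁] s} {t | MeasurableSet[m₂] t}) := by
  refine le_antisymm (sup_le (fun s hs => ?_) (fun t ht => ?_)) (generateFrom_le ?_)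
  · exact .basic _ ⟨s, hs, Set.univ, .univ, Set.inter_univ s⟩
  · exact .basic _ ⟨Set.univ, .univ, t, ht, Set.univ_inter t⟩
  · rintro _ ⟨s, hs, t, ht, rfl⟩
    exact (le_sup_left (b := m₂) _ hs).inter (le_sup_right (a := m₁) _ ht)

lemma isPiSystem_image2_inter (m₁ m₂ : MeasurableSpace Ω) :
    IsPiSystem (Set.image2 (· ∩ ·) {s | MeasurableSet[m₁] s} {t | MeasurableSet[m₂] t}) := by
  rintro _ ⟨s₁, hs₁, t₁, ht₁, rfl⟩ _ ⟨s₂, hs₂, t₂, ht₂, rfl⟩ _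
  exact ⟨s₁ ∩ s₂, hs₁.inter hs₂, t₁ ∩ t₂, ht₁.inter ht₂, Set.inter_inter_inter_comm _ _ _ _⟩

variable [IsFiniteMeasure μ]

lemma setIntegral_eq_measureReal_mul_integral_of_indep {m₁ m₂ : MeasurableSpace Ω}
    (h₁ : m₁ ≤ mΩ) (h₂ : m₂ ≤ mΩ) (hind : Indep m₁ m₂ μ) {f : Ω → ℝ} (hf : Integrable f μ)
    (hfm : StronglyMeasurable[m₁] f) {t : Set Ω} (ht : MeasurableSet[m₂] t) :
    ∫ ω in t, f ω ∂μ = μ.real t * ∫ ω, f ω ∂μ := by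
  rw [← setIntegral_condExp h₂ hf ht, setIntegral_congr_ae (h₂ _ ht)
    ((condExp_indep_eq h₁ h₂ hfm hind).mono fun _ h _ => h),
    setIntegral_const, smul_eq_mul]

theorem condExp_sup_ae_eq_of_indep {mX m₁ m₂ : MeasurableSpace Ω} (hX : mX ≤ mΩ)
    (h₁ : m₁ ≤ mΩ) (h₂ : m₂ ≤ mΩ) (hind : Indep (mX ⊔ m₁) m₂ μ) {f : Ω → ℝ}
    (hf : StronglyMeasurable[mX] f) :
    μ[f | m₁ ⊔ m₂] =ᵐ[μ] μ[f | m₁] := by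
  by_cases hfi : Integrable f μ
  swap; · simp_rw [condExp_of_not_integrable hfi]; rfl
  have h₁₂ : m₁ ⊔ m₂ ≤ mΩ := sup_le h₁ h₂
  refine (ae_eq_condExp_of_forall_setIntegral_eq h₁₂ hfi
    (fun _ _ _ => integrable_condExp.integrableOn) (fun s hs _ => ?_)
    (stronglyMeasurable_condExp.mono le_sup_left).aestronglyMeasurable).symm
  clear ‹μ s < ⊤›
  -- Both sides agree on rectangles `s ∩ t` by independence, hence everywhere by Dynkin's lemma.
  induction s, hs using MeasurableSpace.induction_on_inter
    (MeasurableSpace.sup_eq_generateFrom_inter m₁ m₂) (isPiSystem_image2_inter m₁ m₂) with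
  | empty => simp
  | basic _ hst =>
    obtain ⟨s, hs, t, ht, rfl⟩ := hst
    have hXm₁ : mX ⊔ m₁ ≤ mΩ := sup_le hX h₁
    have hrect : ∀ g : Ω → ℝ, Integrable g μ → StronglyMeasurable[mX ⊔ m₁] g →
        ∫ ω in s ∩ t, g ω ∂μ = μ.real t * ∫ ω in s, g ω ∂μ := fun g hg hgm => by
      rw [Set.inter_comm, ← setIntegral_indicator (h₁ _ hs), ← integral_indicator (h₁ _ hs)]
      exact setIntegral_eq_measureReal_mul_integral_of_indep hXm₁ h₂ hind
        (hg.indicator (h₁ _ hs)) (hgm.indicator (le_sup_right (a := mX) _ hs)) ht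
    rw [hrect _ integrable_condExp (stronglyMeasurable_condExp.mono le_sup_right),
      hrect f hfi (hf.mono le_sup_left), setIntegral_condExp h₁ hfi hs]
  | compl t ht ih =>
    have hint := integral_add_compl (h₁₂ _ ht) (integrable_condExp (m := m₁) (f := f) (μ := μ))
    rw [integral_condExp h₁, ← integral_add_compl (h₁₂ _ ht) hfi, ih] at hint
    linarith
  | iUnion t hdisj ht ih =>
    rw [integral_iUnion (fun i => h₁₂ _ (ht i)) hdisj integrable_condExp.integrableOn,
      integral_iUnion (fun i => h₁₂ _ (ht i)) hdisj hfi.integrableOn]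
    exact tsum_congr ih

end IndepSup

section CondPmf

variable {Ω α β : Type*} {mΩ : MeasurableSpace Ω} {μ : Measure Ω} [MeasurableSpace β]
  {X : Ω → α} {Y : Ω → β}

noncomputable def condPmf (μ : Measure Ω) (X : Ω → α) (Y : Ω → β) (a : α) : Ω → ℝ :=
  μ[(X ⁻¹' {a}).indicator fun _ => 1 | MeasurableSpace.comap Y inferInstance]

lemma shCondEntropy_eq_integral_sum_negMulLog_condPmf [Fintype α] :
    shCondEntropy μ X Y = ∫ ω, ∑ a, Real.negMulLog (condPmf μ X Y a ω) ∂μ := by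
  simp only [shCondEntropy, condPmf, tsum_fintype]

lemma condPmf_nonneg (a : α) : ∀ᵐ ω ∂μ, 0 ≤ condPmf μ X Y a ω :=
  condExp_nonneg (.of_forall fun _ => Set.indicator_nonneg (fun _ _ => zero_le_one) _)

lemma condPmf_le_one [IsFiniteMeasure μ] [MeasurableSpace α] [MeasurableSingletonClass α]
    (hX : Measurable X) (hY : Measurable Y) (a : α) : ∀ᵐ ω ∂μ, condPmf μ X Y a ω ≤ 1 := by
  have h := condExp_mono (m := MeasurableSpace.comap Y inferInstance)
    ((integrable_const (μ := μ) (1 : ℝ)).indicator (hX (measurableSet_singleton a)))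
    (integrable_const 1)
    (.of_forall fun _ => Set.indicator_le_self' (fun _ _ => zero_le_one) _)
  rwa [condExp_const hY.comap_le] at h

lemma integrable_sum_negMulLog_condPmf [Fintype α] [IsFiniteMeasure μ] [MeasurableSpace α]
    [MeasurableSingletonClass α] (hX : Measurable X) (hY : Measurable Y) :
    Integrable (fun ω => ∑ a, Real.negMulLog (condPmf μ X Y a ω)) μ := by
  refine integrable_finsetSum _ fun a _ => Integrable.mono' (integrable_const 1)
    (Real.continuous_negMulLog.comp_aestronglyMeasurable integrable_condExp.aestronglyMeasurable)
    ?_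
  filter_upwards [condPmf_nonneg (μ := μ) (X := X) (Y := Y) a, condPmf_le_one hX hY a]
    with ω h0 h1
  rw [Real.norm_of_nonneg (Real.negMulLog_nonneg h0 h1)]
  linarith [Real.negMulLog_le_one_sub_self h0]

lemma sum_mul_condPmf_ae_eq_condExp [IsFiniteMeasure μ] [Fintype α] [MeasurableSpace α]
    [MeasurableSingletonClass α] (hX : Measurable X) {g : α × β → ℝ} (hg : Measurable g)
    (hgi : Integrable (fun ω => g (X ω, Y ω)) μ) :
    (fun ω => ∑ a, g (a, Y ω) * condPmf μ X Y a ω)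
      =ᵐ[μ] μ[fun ω => g (X ω, Y ω) | MeasurableSpace.comap Y inferInstance] := by
  classical
  set ind : α → Ω → ℝ := fun a => (X ⁻¹' {a}).indicator fun _ => 1
  have hint : ∀ a, Integrable ((fun ω => g (a, Y ω)) * ind a) μ := fun a => by
    have : (fun ω => g (a, Y ω)) * ind a = (X ⁻¹' {a}).indicator fun ω => g (X ω, Y ω) :=
      funext fun ω => by by_cases h : X ω = a <;> simp [ind, h]
    exact this ▸ hgi.indicator (hX (measurableSet_singleton a))
  have hdecomp : (fun ω => g (X ω, Y ω)) = ∑ a, (fun ω => g (a, Y ω)) * ind a := by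
    funext ω
    simp [ind, Set.indicator_apply, Finset.sum_apply]
  have hpull : ∀ a, μ[(fun ω => g (a, Y ω)) * ind a | MeasurableSpace.comap Y inferInstance]
      =ᵐ[μ] (fun ω => g (a, Y ω)) * condPmf μ X Y a := fun a =>
    condExp_mul_of_stronglyMeasurable_left
      (hg.comp (measurable_const.prodMk (comap_measurable Y))).stronglyMeasurable
      (hint a) ((integrable_const 1).indicator (hX (measurableSet_singleton a)))
  rw [hdecomp]
  filter_upwards [condExp_finsetSum (s := univ) (fun a _ => hint a)
    (MeasurableSpace.comap Y inferInstance), ae_all_iff.2 hpull] with ω hsum hpull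
  simp only [hsum, Finset.sum_apply, hpull, Pi.mul_apply]

lemma condPmf_comp_ae_eq_sum [IsFiniteMeasure μ] [Fintype α] [MeasurableSpace α]
    [MeasurableSingletonClass α] {δ : Type*} [MeasurableSpace δ] [MeasurableSingletonClass δ]
    [DecidableEq δ] (hX : Measurable X) (hY : Measurable Y) {ψ : α × β → δ} (hψ : Measurable ψ)
    (d : δ) :
    condPmf μ (fun ω => ψ (X ω, Y ω)) Y d
      =ᵐ[μ] fun ω => ∑ a with ψ (a, Y ω) = d, condPmf μ X Y a ω := by
  have hg : Measurable ((ψ ⁻¹' {d}).indicator fun _ => (1 : ℝ)) :=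
    measurable_const.indicator (hψ (measurableSet_singleton d))
  have hgi : Integrable (fun ω => (ψ ⁻¹' {d}).indicator (fun _ => (1 : ℝ)) (X ω, Y ω)) μ :=
    (integrable_const 1).indicator (hψ.comp (hX.prodMk hY) (measurableSet_singleton d))
  refine (sum_mul_condPmf_ae_eq_condExp hX hg hgi).symm.trans (.of_forall fun ω => ?_)
  simp only [Finset.sum_filter]
  refine Finset.sum_congr rfl fun a _ => ?_
  by_cases h : ψ (a, Y ω) = d <;> simp [h]

theorem shCondEntropy_sub_shCondEntropy_comp_le [IsFiniteMeasure μ] [Fintype α]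
    [MeasurableSpace α] [MeasurableSingletonClass α] {δ : Type*} [Fintype δ] [MeasurableSpace δ]
    [MeasurableSingletonClass δ] (hX : Measurable X) (hY : Measurable Y) {ψ : α × β → δ}
    (hψ : Measurable ψ) :
    shCondEntropy μ X Y - shCondEntropy μ (fun ω => ψ (X ω, Y ω)) Y
      ≤ ∫ ω, Real.log ({ζ | ψ (ζ, Y ω) = ψ (X ω, Y ω)}.ncard : ℝ) ∂μ := by
  classical
  set g : α × β → ℝ := fun x => Real.log ({ζ | ψ (ζ, x.2) = ψ x}.ncard : ℝ)
  have hg : Measurable g := measurable_log_ncard_setOf_eq hψ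
  have hgle : ∀ x, ‖g x‖ ≤ Nat.card α := fun x => by
    rw [Real.norm_of_nonneg (Real.log_natCast_nonneg _)]
    exact (Real.log_le_self (Nat.cast_nonneg _)).trans (Nat.cast_le.2 (Set.ncard_le_card _))
  have hgi : Integrable (fun ω => g (X ω, Y ω)) μ :=
    .of_bound (hg.comp (hX.prodMk hY)).aestronglyMeasurable _ (.of_forall fun ω => hgle _)
  have hIX := integrable_sum_negMulLog_condPmf (μ := μ) hX hY
  have hIZ := integrable_sum_negMulLog_condPmf (μ := μ) (X := fun ω => ψ (X ω, Y ω))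
    (hψ.comp (hX.prodMk hY)) hY
  rw [shCondEntropy_eq_integral_sum_negMulLog_condPmf,
    shCondEntropy_eq_integral_sum_negMulLog_condPmf, ← integral_sub hIX hIZ]
  refine (integral_mono_ae (hIX.sub hIZ) integrable_condExp ?_).trans_eq
    (integral_condExp hY.comap_le)
  filter_upwards [ae_all_iff.2 fun d => condPmf_comp_ae_eq_sum hX hY hψ d,
    ae_all_iff.2 (condPmf_nonneg (μ := μ) (X := X) (Y := Y)),
    sum_mul_condPmf_ae_eq_condExp hX hg hgi] with ω hZ hp hrhs
  rw [← hrhs]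
  simp only [Pi.sub_apply, hZ]
  exact Real.sum_negMulLog_sub_sum_negMulLog_fiber_le (fun a => ψ (a, Y ω)) hp

lemma condPmf_prodMk_ae_eq_of_indepFun [IsFiniteMeasure μ] [MeasurableSpace α]
    [MeasurableSingletonClass α] {γ : Type*} [MeasurableSpace γ] {W : Ω → β} {G : Ω → γ}
    (hX : Measurable X) (hW : Measurable W) (hG : Measurable G)
    (hindep : IndepFun (fun ω => (X ω, W ω)) G μ) (a : α) :
    condPmf μ X (fun ω => (W ω, G ω)) a =ᵐ[μ] condPmf μ X W a := by
  rw [IndepFun_iff_Indep] at hindep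
  erw [MeasurableSpace.comap_prodMk] at hindep
  unfold condPmf
  erw [MeasurableSpace.comap_prodMk]
  exact condExp_sup_ae_eq_of_indep hX.comap_le hW.comap_le hG.comap_le hindep
    (stronglyMeasurable_const.indicator (comap_measurable X (measurableSet_singleton a)))

lemma shCondEntropy_prodMk_eq_of_indepFun [IsFiniteMeasure μ] [Fintype α]
    [MeasurableSpace α] [MeasurableSingletonClass α] {γ : Type*} [MeasurableSpace γ]
    {W : Ω → β} {G : Ω → γ} (hX : Measurable X) (hW : Measurable W) (hG : Measurable G)
    (hindep : IndepFun (fun ω => (X ω, W ω)) G μ) :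
    shCondEntropy μ X (fun ω => (W ω, G ω)) = shCondEntropy μ X W := by
  simp only [shCondEntropy_eq_integral_sum_negMulLog_condPmf]
  refine integral_congr_ae ?_
  filter_upwards [ae_all_iff.2 (condPmf_prodMk_ae_eq_of_indepFun hX hW hG hindep)] with ω h
  simp only [h]

end CondPmf

open MeasureTheory ProbabilityTheory in
theorem stmt_17_general (Ω α β γ δ : Type) [MeasurableSpace Ω] (μ : Measure Ω)
    [IsProbabilityMeasure μ]
    [Fintype α] [MeasurableSpace α] [MeasurableSingletonClass α]
    [MeasurableSpace β]
    [MeasurableSpace γ]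
    [Fintype δ] [MeasurableSpace δ] [MeasurableSingletonClass δ]
    (Z' : Ω → α) (W : Ω → β) (G : Ω → γ) (φ : α × β × γ → δ)
    (hZ' : Measurable Z') (hW : Measurable W) (hG : Measurable G) (hφ : Measurable φ)
    (hindep : IndepFun (fun ω => (Z' ω, W ω)) G μ) :
    shCondEntropy μ Z' W
        - shCondEntropy μ (fun ω => φ (Z' ω, W ω, G ω)) (fun ω => (W ω, G ω))
      ≤ ∫ ω, Real.log
          (({ζ : α | φ (ζ, W ω, G ω) = φ (Z' ω, W ω, G ω)}.ncard : ℝ)) ∂μ := by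
  rw [← shCondEntropy_prodMk_eq_of_indepFun hZ' hW hG hindep]
  exact shCondEntropy_sub_shCondEntropy_comp_le hZ' (hW.prodMk hG) hφ

open MeasureTheory ProbabilityTheory in
theorem stmt_17 (Ω α β γ δ : Type) [MeasurableSpace Ω] (μ : Measure Ω)
    [IsProbabilityMeasure μ]
    [Fintype α] [MeasurableSpace α] [MeasurableSingletonClass α]
    [Fintype β] [MeasurableSpace β] [MeasurableSingletonClass β]
    [MeasurableSpace γ] [StandardBorelSpace γ]
    [Fintype δ] [MeasurableSpace δ] [MeasurableSingletonClass δ]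
    (Z' : Ω → α) (W : Ω → β) (G : Ω → γ) (φ : α × β × γ → δ)
    (hZ' : Measurable Z') (hW : Measurable W) (hG : Measurable G) (hφ : Measurable φ)
    (hindep : IndepFun (fun ω => (Z' ω, W ω)) G μ) :
    shCondEntropy μ Z' W
        - shCondEntropy μ (fun ω => φ (Z' ω, W ω, G ω)) (fun ω => (W ω, G ω))
      ≤ ∫ ω, Real.log
          (({ζ : α | φ (ζ, W ω, G ω) = φ (Z' ω, W ω, G ω)}.ncard : ℝ)) ∂μ :=
  stmt_17_general Ω α β γ δ μ Z' W G φ hZ' hW hG hφ hindep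
end

section
/- Let S be a nonempty finite set of integers, let c be a real number, and let ι : S → ℝ satisfy |ι(z)| < 4 for all z ∈ S. Suppose ⌊|c + ι(z) − z|⌋ ≥ 1 for every z ∈ S, where ⌊·⌋ denotes the usual floor function, and let M = max_{z ∈ S} ⌊|c + ι(z) − z|⌋. Then ∑_{z ∈ S} 1/⌊|c + ι(z) − z|⌋ ≤ 18·(1 + log M). -/
lemma sum_Icc_one_div_eq_harmonic (m : ℕ) :
    ∑ n ∈ Finset.Icc (1:ℤ) (m:ℤ), (1:ℝ)/(n:ℝ) = (harmonic m : ℝ) := by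
  have h2 : (harmonic m : ℝ) = ∑ i ∈ Finset.Icc 1 m, ((i:ℝ))⁻¹ := by
    rw [harmonic_eq_sum_Icc]; push_cast; rfl
  rw [h2]
  refine Finset.sum_nbij' (fun n => n.toNat) (fun i => (i:ℤ)) ?_ ?_ ?_ ?_ ?_
  · intro n hn; simp only [Finset.mem_Icc] at *; omega
  · intro i hi; simp only [Finset.mem_Icc] at *; omega
  · intro n hn; simp only [Finset.mem_Icc] at hn; simp; omega
  · intro i hi; simp
  · intro n hn
    simp only [Finset.mem_Icc] at hn
    rw [one_div]
    congr 1
    exact_mod_cast (Int.toNat_of_nonneg (by omega)).symm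

theorem stmt_18 (S : Finset ℤ) (hS : S.Nonempty) (c : ℝ) (ι : ℤ → ℝ)
    (hι : ∀ z ∈ S, |ι z| < 4)
    (hfloor : ∀ z ∈ S, 1 ≤ ⌊|c + ι z - (z : ℝ)|⌋) :
    ∑ z ∈ S, (1 : ℝ) / ((⌊|c + ι z - (z : ℝ)|⌋ : ℤ) : ℝ)
      ≤ 18 * (1 + Real.log ((S.sup' hS (fun z => ⌊|c + ι z - (z : ℝ)|⌋) : ℤ) : ℝ)) := by
  set f : ℤ → ℤ := fun z => ⌊|c + ι z - (z : ℝ)|⌋ with hf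
  set M : ℤ := S.sup' hS f with hM
  obtain ⟨z₀, hz₀⟩ := hS
  have hM1 : 1 ≤ M := le_trans (hfloor z₀ hz₀) (Finset.le_sup' f hz₀)
  -- fiber cardinality bound
  have hcard : ∀ n : ℤ, ((S.filter (fun z => f z = n)).card : ℝ) ≤ 18 := by
    intro n
    have hsub : S.filter (fun z => f z = n) ⊆
        Finset.Icc (⌊c⌋ - n - 4) (⌊c⌋ - n + 4) ∪ Finset.Icc (⌊c⌋ + n - 3) (⌊c⌋ + n + 5) := by
      intro z hz
      obtain ⟨hzS, hfz⟩ := Finset.mem_filter.mp hz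
      have hfz' : ⌊|c + ι z - (z : ℝ)|⌋ = n := hfz
      have hflo : (n : ℝ) ≤ |c + ι z - (z : ℝ)| ∧ |c + ι z - (z : ℝ)| < n + 1 := by
        constructor
        · rw [← hfz']; exact_mod_cast Int.floor_le _
        · rw [← hfz']; exact_mod_cast Int.lt_floor_add_one |c + ι z - (z:ℝ)|
      have hι4 : -4 < ι z ∧ ι z < 4 := abs_lt.mp (hι z hzS)
      have hc1 : (⌊c⌋ : ℝ) ≤ c := Int.floor_le c
      have hc2 : c < ⌊c⌋ + 1 := Int.lt_floor_add_one c
      rcases le_or_gt 0 (c + ι z - (z : ℝ)) with ht | ht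
      · -- t ≥ 0 : left interval
        rw [abs_of_nonneg ht] at hflo
        refine Finset.mem_union_left _ (Finset.mem_Icc.mpr ⟨?_, ?_⟩)
        · have h : ((⌊c⌋ - n - 5 : ℤ) : ℝ) < ((z : ℤ) : ℝ) := by push_cast; linarith [hflo.2, hι4.1]
          have h2 : (⌊c⌋ - n - 5 : ℤ) < z := by exact_mod_cast h
          omega
        · have h : ((z : ℤ) : ℝ) < ((⌊c⌋ - n + 5 : ℤ) : ℝ) := by push_cast; linarith [hflo.1, hι4.2]
          have h2 : (z : ℤ) < ⌊c⌋ - n + 5 := by exact_mod_cast h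
          omega
      · -- t < 0 : right interval
        rw [abs_of_neg ht] at hflo
        refine Finset.mem_union_right _ (Finset.mem_Icc.mpr ⟨?_, ?_⟩)
        · have h : ((⌊c⌋ + n - 4 : ℤ) : ℝ) < ((z : ℤ) : ℝ) := by push_cast; linarith [hflo.1, hι4.1]
          have h2 : (⌊c⌋ + n - 4 : ℤ) < z := by exact_mod_cast h
          omega
        · have h : ((z : ℤ) : ℝ) < ((⌊c⌋ + n + 6 : ℤ) : ℝ) := by push_cast; linarith [hflo.2, hι4.2]
          have h2 : (z : ℤ) < ⌊c⌋ + n + 6 := by exact_mod_cast h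
          omega
    have h1 : (S.filter (fun z => f z = n)).card ≤ 18 := by
      calc (S.filter (fun z => f z = n)).card
          ≤ (Finset.Icc (⌊c⌋ - n - 4) (⌊c⌋ - n + 4) ∪
            Finset.Icc (⌊c⌋ + n - 3) (⌊c⌋ + n + 5)).card := Finset.card_le_card hsub
        _ ≤ (Finset.Icc (⌊c⌋ - n - 4) (⌊c⌋ - n + 4)).card +
            (Finset.Icc (⌊c⌋ + n - 3) (⌊c⌋ + n + 5)).card := Finset.card_union_le _ _
        _ ≤ 18 := by rw [Int.card_Icc, Int.card_Icc]; omega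
    exact_mod_cast h1
  have hmaps : ∀ z ∈ S, f z ∈ Finset.Icc 1 M :=
    fun z hz => Finset.mem_Icc.mpr ⟨hfloor z hz, Finset.le_sup' f hz⟩
  have hMnat : ((M.toNat : ℤ) : ℝ) = (M : ℝ) := by
    norm_cast; omega
  calc ∑ z ∈ S, (1 : ℝ) / (f z : ℝ)
      = ∑ n ∈ Finset.Icc 1 M, ∑ z ∈ S.filter (fun z => f z = n), (1 : ℝ) / (f z : ℝ) :=
        (Finset.sum_fiberwise_of_maps_to hmaps _).symm
    _ = ∑ n ∈ Finset.Icc 1 M, ((S.filter (fun z => f z = n)).card : ℝ) * (1 / (n : ℝ)) := by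
        refine Finset.sum_congr rfl fun n _ => ?_
        rw [Finset.sum_congr rfl fun z hz => by
          rw [(Finset.mem_filter.mp hz).2], Finset.sum_const, nsmul_eq_mul]
    _ ≤ ∑ n ∈ Finset.Icc 1 M, 18 * (1 / (n : ℝ)) := by
        refine Finset.sum_le_sum fun n hn => ?_
        have hn1 : (1:ℤ) ≤ n := (Finset.mem_Icc.mp hn).1
        have : (0:ℝ) ≤ 1 / (n:ℝ) := by positivity
        exact mul_le_mul_of_nonneg_right (hcard n) this
    _ = 18 * ∑ n ∈ Finset.Icc 1 M, (1 : ℝ) / (n : ℝ) := by rw [Finset.mul_sum]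
    _ ≤ 18 * (1 + Real.log (M : ℝ)) := by
        gcongr 18 * ?_
        have heq : (Finset.Icc (1:ℤ) M) = Finset.Icc (1:ℤ) (M.toNat : ℤ) := by
          congr 1; omega
        rw [heq, sum_Icc_one_div_eq_harmonic]
        calc (harmonic M.toNat : ℝ) ≤ 1 + Real.log (M.toNat : ℕ) :=
              harmonic_le_one_add_log M.toNat
          _ = 1 + Real.log (M : ℝ) := by rw [← hMnat]; norm_cast
end
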